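/- Fix τ ∈ (0,2π). Consider φ(ω,τ) := i·λ(ω)·(e^(-iτ)+1) - ω·(e^(-iτ)-1) for ω ∈ U, where λ(ω) = (1-ω²)^(1/2) (principal branch). Then φ(·,τ) has exactly one zero in U, namely ω = -cos(τ/2); in particular this zero is real and lies in the spectral gap (-1,1), and its square equals cos²(τ/2). (φ(ω,τ) is, up to sign, the Wronskian of the two decaying solutions η₊, η₋ of the dislocated Dirac system, so its unique zero in the gap is the eigenvalue ω_τ of the dislocated Dirac operator.) -/
import Mathlib

open Complex

/-- `U = ℂ \ ((-∞,-1] ∪ [1,∞))`. -/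
def U : Set ℂ := {ω : ℂ | ω.im ≠ 0 ∨ (-1 < ω.re ∧ ω.re < 1)}

/-- `λ(ω) = (1-ω²)^(1/2)`, principal branch of the complex square root. -/
noncomputable def lam (ω : ℂ) : ℂ := (1 - ω ^ 2) ^ ((1 : ℂ) / 2)

lemma lam_sq (ω : ℂ) : lam ω ^ 2 = 1 - ω ^ 2 := by
  unfold lam
  rcases eq_or_ne (1 - ω ^ 2) 0 with h | h
  · rw [h, Complex.zero_cpow (by norm_num)]
    norm_num
  · rw [sq, ← Complex.cpow_add _ _ h]
    norm_num

lemma lam_real (x : ℝ) (hx : 0 ≤ 1 - x ^ 2) : lam (x : ℂ) = (Real.sqrt (1 - x ^ 2) : ℂ) := by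
  unfold lam
  have h1 : ((1 : ℂ) - (x : ℂ) ^ 2) = ((1 - x ^ 2 : ℝ) : ℂ) := by push_cast; ring
  rw [h1, show ((1 : ℂ) / 2) = (((1 : ℝ) / 2 : ℝ) : ℂ) by norm_num,
    ← Complex.ofReal_cpow hx, Real.sqrt_eq_rpow]

theorem stmt6 (τ : ℝ) (hτ : τ ∈ Set.Ioo 0 (2 * Real.pi)) :
    ((-Real.cos (τ / 2) : ℝ) : ℂ) ∈ U ∧
    (-1 < -Real.cos (τ / 2) ∧ -Real.cos (τ / 2) < 1) ∧
    (∀ ω ∈ U,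
      (Complex.I * lam ω * (Complex.exp (-(Complex.I * τ)) + 1)
          - ω * (Complex.exp (-(Complex.I * τ)) - 1) = 0
        ↔ ω = ((-Real.cos (τ / 2) : ℝ) : ℂ))) ∧
    (-Real.cos (τ / 2)) ^ 2 = Real.cos (τ / 2) ^ 2 := by
  obtain ⟨hτ0, hτ2⟩ := hτ
  set c : ℝ := Real.cos (τ / 2) with hc
  set s : ℝ := Real.sin (τ / 2) with hs
  have hs0 : 0 < s := Real.sin_pos_of_pos_of_lt_pi (by linarith) (by linarith)
  have hcs : s ^ 2 + c ^ 2 = 1 := Real.sin_sq_add_cos_sq _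
  have hcabs : -1 < c ∧ c < 1 := by constructor <;> nlinarith
  have hcsC : (s : ℂ) ^ 2 + (c : ℂ) ^ 2 = 1 := by exact_mod_cast congrArg (Complex.ofReal ·) hcs
  have h1 : Complex.exp (((-(τ / 2) : ℝ) : ℂ) * Complex.I) = (c : ℂ) - s * Complex.I := by
    rw [Complex.exp_mul_I, ← Complex.ofReal_cos, ← Complex.ofReal_sin, Real.cos_neg,
      Real.sin_neg, hc, hs, Complex.ofReal_neg]
    ring
  have hEne : (c : ℂ) - s * Complex.I ≠ 0 := h1 ▸ Complex.exp_ne_zero _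
  have hE : Complex.exp (-(Complex.I * τ)) = ((c : ℂ) - s * Complex.I) ^ 2 := by
    rw [← h1, ← Complex.exp_nat_mul]
    congr 1
    push_cast
    ring
  have hlamc : lam ((-c : ℝ) : ℂ) = (s : ℂ) := by
    rw [lam_real (-c) (by nlinarith)]
    have h2 : 1 - (-c) ^ 2 = s ^ 2 := by nlinarith
    rw [h2, Real.sqrt_sq hs0.le]
  have hlamc' : lam ((c : ℝ) : ℂ) = (s : ℂ) := by
    rw [lam_real c (by nlinarith)]
    have h2 : 1 - c ^ 2 = s ^ 2 := by nlinarith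
    rw [h2, Real.sqrt_sq hs0.le]
  refine ⟨?_, ⟨by linarith [hcabs.2], by linarith [hcabs.1]⟩, ?_, by ring⟩
  · refine Or.inr ⟨?_, ?_⟩ <;>
      simp only [Complex.ofReal_neg, Complex.neg_re, Complex.ofReal_re] <;>
      linarith [hcabs.1, hcabs.2]
  · intro ω hω
    have hfact : Complex.I * lam ω * (Complex.exp (-(Complex.I * τ)) + 1)
          - ω * (Complex.exp (-(Complex.I * τ)) - 1)
        = 2 * Complex.I * ((c : ℂ) - s * Complex.I) * ((c : ℂ) * lam ω + s * ω) := by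
      rw [hE]
      linear_combination (-(Complex.I * lam ω + ω)) * hcsC
        + (Complex.I * lam ω + ω) * (s : ℂ) ^ 2 * Complex.I_sq
    have h2I : (2 : ℂ) * Complex.I * ((c : ℂ) - s * Complex.I) ≠ 0 := by
      simp [hEne, Complex.I_ne_zero]
    rw [hfact, mul_eq_zero]
    simp only [h2I, false_or]
    have hsne : (s : ℂ) ≠ 0 := by exact_mod_cast hs0.ne'
    constructor
    · intro h
      have hl2 := lam_sq ω
      have hω2 : ω ^ 2 = (c : ℂ) ^ 2 := by
        linear_combination ((s : ℂ) * ω - c * lam ω) * h + (c : ℂ) ^ 2 * hl2 - ω ^ 2 * hcsC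
      have hsplit : (ω - c) * (ω + c) = 0 := by linear_combination hω2
      rcases mul_eq_zero.1 hsplit with h3 | h3
      · have hωc : ω = (c : ℂ) := sub_eq_zero.mp h3
        rw [hωc, hlamc'] at h
        have h2s : (2 : ℂ) * (s : ℂ) ≠ 0 := by simp [hsne]
        have hc0 : (c : ℂ) = 0 := by
          have h4 : (2 : ℂ) * (s : ℂ) * (c : ℂ) = 0 := by linear_combination h
          exact (mul_eq_zero.mp h4).resolve_left h2s
        rw [hωc]
        push_cast
        rw [hc0]
        ring
      · have : ω = -(c : ℂ) := by linear_combination h3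
        rw [this]; push_cast; ring
    · intro h
      rw [h]
      have h5 : lam (((-c : ℝ)) : ℂ) = (s : ℂ) := hlamc
      push_cast at h5 ⊢
      rw [h5]
      ring
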